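/- For every integer n ≥ 5, the weak (2n−1)-metric dimension of K_n × K_n equals n² − n, with V \ {(i,i) : i ∈ [n]} being a weak (2n−1)-metric basis. -/
import Mathlib


open Finset

/-- Distance in the direct product `K_n × K_n` (per the distance formula):
`0` if equal, `1` if the two vertices differ in both coordinates, `2` otherwise. -/
def dd {n : ℕ} (x y : Fin n × Fin n) : ℕ :=
  if x = y then 0 else if x.1 ≠ y.1 ∧ x.2 ≠ y.2 then 1 else 2

/-- `Δ_S(x,y) = Σ_{z ∈ S} |d(x,z) − d(y,z)|`. -/
def delS {n : ℕ} (S : Finset (Fin n × Fin n)) (x y : Fin n × Fin n) : ℕ :=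
  ∑ z ∈ S, ((dd x z : ℤ) - (dd y z : ℤ)).natAbs

/-- `S` is a weak `k`-resolving set. -/
def weakRes {n : ℕ} (k : ℕ) (S : Finset (Fin n × Fin n)) : Prop :=
  ∀ x y : Fin n × Fin n, x ≠ y → k ≤ delS S x y

/-- The weak `k`-metric dimension of `K_n × K_n`. -/
noncomputable def wdim (n k : ℕ) : ℕ :=
  sInf {m | ∃ S : Finset (Fin n × Fin n), weakRes k S ∧ S.card = m}

/-- Vertical layer `L_i`. -/
def Lv {n : ℕ} (i : Fin n) : Finset (Fin n × Fin n) := univ.filter (fun p => p.1 = i)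

/-- Horizontal layer `L^j`. -/
def Lh {n : ℕ} (j : Fin n) : Finset (Fin n × Fin n) := univ.filter (fun p => p.2 = j)

/-- Intersecting layers `L_i^j = L_i ∪ L^j`. -/
def Lij {n : ℕ} (i j : Fin n) : Finset (Fin n × Fin n) := Lv i ∪ Lh j


def offd (n : ℕ) : Finset (Fin n × Fin n) := univ.filter (fun p => p.1 ≠ p.2)

section helpers
variable {n : ℕ}

lemma dd_one {x y : Fin n × Fin n} (h1 : x.1 ≠ y.1) (h2 : x.2 ≠ y.2) : dd x y = 1 := by
  have h : x ≠ y := fun h => h1 (by rw [h])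
  simp [dd, h, h1, h2]

lemma dd_two {x y : Fin n × Fin n} (h : x ≠ y) (h2 : x.1 = y.1 ∨ x.2 = y.2) : dd x y = 2 := by
  have h' : ¬ (x.1 ≠ y.1 ∧ x.2 ≠ y.2) := by rcases h2 with h2|h2 <;> simp [h2]
  simp [dd, h, h']

lemma dd_self (x : Fin n × Fin n) : dd x x = 0 := by simp [dd]

lemma dd_swap (x z : Fin n × Fin n) : dd x.swap z.swap = dd x z := by
  obtain ⟨x1, x2⟩ := x; obtain ⟨z1, z2⟩ := z
  by_cases h1 : x1 = z1 <;> by_cases h2 : x2 = z2 <;>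
    simp [dd, Prod.mk.injEq, Prod.swap, h1, h2]

lemma natAbs_comm (a b : ℤ) : (a - b).natAbs = (b - a).natAbs := by
  rw [← Int.natAbs_neg (a - b)]; ring_nf

lemma delS_comm (S : Finset (Fin n × Fin n)) (x y : Fin n × Fin n) :
    delS S x y = delS S y x :=
  Finset.sum_congr rfl (fun z _ => natAbs_comm _ _)

lemma delS_swap (x y : Fin n × Fin n) :
    delS (offd n) x.swap y.swap = delS (offd n) x y := by
  unfold delS offd
  refine Finset.sum_bij' (fun z _ => Prod.swap z) (fun z _ => Prod.swap z) ?_ ?_ ?_ ?_ ?_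
  · intro z hz; simp only [Finset.mem_filter, Finset.mem_univ, true_and] at hz ⊢
    exact fun h => hz h.symm
  · intro z hz; simp only [Finset.mem_filter, Finset.mem_univ, true_and] at hz ⊢
    exact fun h => hz h.symm
  · intro z _; exact Prod.swap_swap z
  · intro z _; exact Prod.swap_swap z
  · intro z _; rw [← dd_swap x z.swap, ← dd_swap y z.swap, Prod.swap_swap]

lemma prod_subset_S {A B : Finset (Fin n)} (h : ∀ s ∈ A, ∀ t ∈ B, s ≠ t) :
    A ×ˢ B ⊆ offd n := by
  intro z hz
  rw [Finset.mem_product] at hz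
  simp only [offd, Finset.mem_filter, Finset.mem_univ, true_and]
  exact h _ hz.1 _ hz.2

lemma sum_prod_eq {A B : Finset (Fin n)} (f : Fin n × Fin n → ℕ) (v : ℕ)
    (hf : ∀ p ∈ A ×ˢ B, f p = v) : ∑ z ∈ A ×ˢ B, f z = A.card * B.card * v := by
  rw [Finset.sum_congr rfl hf, Finset.sum_const, Finset.card_product, smul_eq_mul]

lemma disj_prod_left {A B C D : Finset (Fin n)} (h : Disjoint A B) :
    Disjoint (A ×ˢ C) (B ×ˢ D) := by
  rw [Finset.disjoint_left]
  intro z hz1 hz2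
  rw [Finset.mem_product] at hz1 hz2
  exact Finset.disjoint_left.1 h hz1.1 hz2.1

lemma disj_prod_right {A B C D : Finset (Fin n)} (h : Disjoint C D) :
    Disjoint (A ×ˢ C) (B ×ˢ D) := by
  rw [Finset.disjoint_left]
  intro z hz1 hz2
  rw [Finset.mem_product] at hz1 hz2
  exact Finset.disjoint_left.1 h hz1.2 hz2.2

lemma disj_single_sdiff {a : Fin n} {s : Finset (Fin n)} (h : a ∈ s) :
    Disjoint ({a} : Finset (Fin n)) (univ \ s) := by
  simp [Finset.disjoint_singleton_left, h]

lemma card_sdiff_univ (s : Finset (Fin n)) : (univ \ s).card = n - s.card := by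
  rw [Finset.card_sdiff_of_subset (Finset.subset_univ _), Finset.card_univ, Fintype.card_fin]

lemma card_triple_le (a b c : Fin n) : ({a, b, c} : Finset (Fin n)).card ≤ 3 := by
  refine le_trans (Finset.card_insert_le _ _) ?_
  have := Finset.card_insert_le b ({c} : Finset (Fin n))
  simp at this ⊢
  omega

lemma parts6 (f : Fin n × Fin n → ℕ) (S T1 T2 T3 T4 T5 T6 : Finset (Fin n × Fin n))
    (h1 : T1 ⊆ S) (h2 : T2 ⊆ S) (h3 : T3 ⊆ S) (h4 : T4 ⊆ S) (h5 : T5 ⊆ S) (h6 : T6 ⊆ S)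
    (d12 : Disjoint T1 T2) (d13 : Disjoint T1 T3) (d14 : Disjoint T1 T4)
    (d15 : Disjoint T1 T5) (d16 : Disjoint T1 T6)
    (d23 : Disjoint T2 T3) (d24 : Disjoint T2 T4) (d25 : Disjoint T2 T5) (d26 : Disjoint T2 T6)
    (d34 : Disjoint T3 T4) (d35 : Disjoint T3 T5) (d36 : Disjoint T3 T6)
    (d45 : Disjoint T4 T5) (d46 : Disjoint T4 T6) (d56 : Disjoint T5 T6) :
    ∑ z ∈ T1, f z + ∑ z ∈ T2, f z + ∑ z ∈ T3, f z + ∑ z ∈ T4, f z + ∑ z ∈ T5, f z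
      + ∑ z ∈ T6, f z ≤ ∑ z ∈ S, f z := by
  have e12 : Disjoint (T1 ∪ T2) T3 := by rw [Finset.disjoint_union_left]; exact ⟨d13, d23⟩
  have e13 : Disjoint (T1 ∪ T2 ∪ T3) T4 := by
    rw [Finset.disjoint_union_left, Finset.disjoint_union_left]; exact ⟨⟨d14, d24⟩, d34⟩
  have e14 : Disjoint (T1 ∪ T2 ∪ T3 ∪ T4) T5 := by
    simp only [Finset.disjoint_union_left]; exact ⟨⟨⟨d15, d25⟩, d35⟩, d45⟩
  have e15 : Disjoint (T1 ∪ T2 ∪ T3 ∪ T4 ∪ T5) T6 := by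
    simp only [Finset.disjoint_union_left]; exact ⟨⟨⟨⟨d16, d26⟩, d36⟩, d46⟩, d56⟩
  calc ∑ z ∈ T1, f z + ∑ z ∈ T2, f z + ∑ z ∈ T3, f z + ∑ z ∈ T4, f z + ∑ z ∈ T5, f z
      + ∑ z ∈ T6, f z
      = ∑ z ∈ T1 ∪ T2 ∪ T3 ∪ T4 ∪ T5 ∪ T6, f z := by
        rw [Finset.sum_union e15, Finset.sum_union e14, Finset.sum_union e13,
          Finset.sum_union e12, Finset.sum_union d12]
    _ ≤ ∑ z ∈ S, f z := Finset.sum_le_sum_of_subset (by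
        intro z hz
        simp only [Finset.mem_union] at hz
        rcases hz with ((((hz|hz)|hz)|hz)|hz)|hz
        exacts [h1 hz, h2 hz, h3 hz, h4 hz, h5 hz, h6 hz])

lemma ne_pair1 {a b s t : Fin n} (h : a ≠ s) : (a, b) ≠ (s, t) := by
  simp only [ne_eq, Prod.mk.injEq, not_and]; intro h'; exact absurd h' h

lemma ne_pair2 {a b s t : Fin n} (h : b ≠ t) : (a, b) ≠ (s, t) := by
  simp only [ne_eq, Prod.mk.injEq, not_and]; intro _; exact h

end helpers

section caseB
variable {n : ℕ}

lemma disj_ss {a b : Fin n} (h : a ≠ b) :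
    Disjoint ({a} : Finset (Fin n)) ({b} : Finset (Fin n)) := by
  rw [Finset.disjoint_singleton_left, Finset.mem_singleton]
  exact h

lemma caseB0 (a b d : Fin n) (hbd : b ≠ d) (hab : a ≠ b) :
    2 * n - 1 ≤ delS (offd n) (a, b) (a, d) := by
  set f : Fin n × Fin n → ℕ := fun z => ((dd (a,b) z : ℤ) - (dd (a,d) z : ℤ)).natAbs with hf
  have hdel : delS (offd n) (a,b) (a,d) = ∑ z ∈ offd n, f z := rfl
  -- column b piece (always used)
  have hv1 : ∀ p ∈ (univ \ {a, b}) ×ˢ ({b} : Finset (Fin n)), f p = 1 := by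
    rintro ⟨s, t⟩ hp
    rw [Finset.mem_product, Finset.mem_sdiff] at hp
    obtain ⟨⟨-, hs⟩, ht⟩ := hp
    rw [Finset.mem_singleton] at ht
    have ht' : t = b := ht
    rw [ht']
    simp only [Finset.mem_insert, Finset.mem_singleton, not_or] at hs
    obtain ⟨hsa, hsb⟩ := hs
    show ((dd (a,b) (s,b) : ℤ) - (dd (a,d) (s,b) : ℤ)).natAbs = 1
    rw [dd_two (ne_pair1 (Ne.symm hsa)) (Or.inr rfl), dd_one (Ne.symm hsa) (Ne.symm hbd)]
    decide
  have hsub1 : (univ \ {a, b}) ×ˢ ({b} : Finset (Fin n)) ⊆ offd n := by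
    refine prod_subset_S fun s hs t ht => ?_
    rw [Finset.mem_singleton] at ht
    simp only [Finset.mem_sdiff, Finset.mem_insert, Finset.mem_singleton, not_or] at hs
    rw [ht]
    exact hs.2.2
  by_cases had : a = d
  · -- B3 : y = (a,a) diagonal
    subst had
    have hba : b ≠ a := hbd
    have hv2 : ∀ p ∈ (univ \ {a}) ×ˢ ({a} : Finset (Fin n)), f p = 1 := by
      rintro ⟨s, t⟩ hp
      rw [Finset.mem_product, Finset.mem_sdiff] at hp
      obtain ⟨⟨-, hs⟩, ht⟩ := hp
      rw [Finset.mem_singleton] at hs ht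
      have ht' : t = a := ht
      rw [ht']
      show ((dd (a,b) (s,a) : ℤ) - (dd (a,a) (s,a) : ℤ)).natAbs = 1
      rw [dd_one (Ne.symm hs) hba, dd_two (ne_pair1 (Ne.symm hs)) (Or.inr rfl)]
      decide
    have hv3 : ∀ p ∈ ({a} : Finset (Fin n)) ×ˢ ({b} : Finset (Fin n)), f p = 2 := by
      rintro ⟨s, t⟩ hp
      rw [Finset.mem_product, Finset.mem_singleton, Finset.mem_singleton] at hp
      have h1' : s = a := hp.1
      have h2' : t = b := hp.2
      rw [h1', h2']
      show ((dd (a,b) (a,b) : ℤ) - (dd (a,a) (a,b) : ℤ)).natAbs = 2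
      rw [dd_self, dd_two (ne_pair2 hba.symm) (Or.inl rfl)]
      decide
    have hsub2 : (univ \ {a}) ×ˢ ({a} : Finset (Fin n)) ⊆ offd n := by
      refine prod_subset_S fun s hs t ht => ?_
      rw [Finset.mem_singleton] at ht
      simp only [Finset.mem_sdiff, Finset.mem_singleton] at hs
      rw [ht]
      exact hs.2
    have hsub3 : ({a} : Finset (Fin n)) ×ˢ ({b} : Finset (Fin n)) ⊆ offd n := by
      refine prod_subset_S fun s hs t ht => ?_
      rw [Finset.mem_singleton] at hs ht
      rw [hs, ht]
      exact hab
    have hle := parts6 f (offd n)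
      ((univ \ {a, b}) ×ˢ ({b} : Finset (Fin n)))
      ((univ \ {a}) ×ˢ ({a} : Finset (Fin n)))
      (({a} : Finset (Fin n)) ×ˢ ({b} : Finset (Fin n))) ∅ ∅ ∅
      hsub1 hsub2 hsub3 (Finset.empty_subset _) (Finset.empty_subset _) (Finset.empty_subset _)
      (disj_prod_right (disj_ss hba))
      (disj_prod_left (disj_single_sdiff (by simp)).symm)
      (Finset.disjoint_empty_right _) (Finset.disjoint_empty_right _)
      (Finset.disjoint_empty_right _)
      (disj_prod_left (disj_single_sdiff (by simp)).symm)
      (Finset.disjoint_empty_right _) (Finset.disjoint_empty_right _)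
      (Finset.disjoint_empty_right _)
      (Finset.disjoint_empty_right _) (Finset.disjoint_empty_right _)
      (Finset.disjoint_empty_right _)
      (Finset.disjoint_empty_right _) (Finset.disjoint_empty_right _)
      (Finset.disjoint_empty_right _)
    rw [Finset.sum_empty, sum_prod_eq f 1 hv1, sum_prod_eq f 1 hv2, sum_prod_eq f 2 hv3,
      card_sdiff_univ, card_sdiff_univ, Finset.card_pair hab] at hle
    simp only [Finset.card_singleton] at hle
    rw [hdel]
    omega
  · -- B1 : extras x and y
    have hv2 : ∀ p ∈ (univ \ {a, d}) ×ˢ ({d} : Finset (Fin n)), f p = 1 := by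
      rintro ⟨s, t⟩ hp
      rw [Finset.mem_product, Finset.mem_sdiff] at hp
      obtain ⟨⟨-, hs⟩, ht⟩ := hp
      rw [Finset.mem_singleton] at ht
      have ht' : t = d := ht
      rw [ht']
      simp only [Finset.mem_insert, Finset.mem_singleton, not_or] at hs
      obtain ⟨hsa, hsd⟩ := hs
      show ((dd (a,b) (s,d) : ℤ) - (dd (a,d) (s,d) : ℤ)).natAbs = 1
      rw [dd_one (Ne.symm hsa) hbd, dd_two (ne_pair1 (Ne.symm hsa)) (Or.inr rfl)]
      decide
    have hv3 : ∀ p ∈ ({a} : Finset (Fin n)) ×ˢ ({b} : Finset (Fin n)), f p = 2 := by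
      rintro ⟨s, t⟩ hp
      rw [Finset.mem_product, Finset.mem_singleton, Finset.mem_singleton] at hp
      have h1' : s = a := hp.1
      have h2' : t = b := hp.2
      rw [h1', h2']
      show ((dd (a,b) (a,b) : ℤ) - (dd (a,d) (a,b) : ℤ)).natAbs = 2
      rw [dd_self, dd_two (ne_pair2 hbd.symm) (Or.inl rfl)]
      decide
    have hv4 : ∀ p ∈ ({a} : Finset (Fin n)) ×ˢ ({d} : Finset (Fin n)), f p = 2 := by
      rintro ⟨s, t⟩ hp
      rw [Finset.mem_product, Finset.mem_singleton, Finset.mem_singleton] at hp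
      have h1' : s = a := hp.1
      have h2' : t = d := hp.2
      rw [h1', h2']
      show ((dd (a,b) (a,d) : ℤ) - (dd (a,d) (a,d) : ℤ)).natAbs = 2
      rw [dd_self, dd_two (ne_pair2 hbd) (Or.inl rfl)]
      decide
    have hsub2 : (univ \ {a, d}) ×ˢ ({d} : Finset (Fin n)) ⊆ offd n := by
      refine prod_subset_S fun s hs t ht => ?_
      rw [Finset.mem_singleton] at ht
      simp only [Finset.mem_sdiff, Finset.mem_insert, Finset.mem_singleton, not_or] at hs
      rw [ht]
      exact hs.2.2
    have hsub3 : ({a} : Finset (Fin n)) ×ˢ ({b} : Finset (Fin n)) ⊆ offd n := by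
      refine prod_subset_S fun s hs t ht => ?_
      rw [Finset.mem_singleton] at hs ht
      rw [hs, ht]
      exact hab
    have hsub4 : ({a} : Finset (Fin n)) ×ˢ ({d} : Finset (Fin n)) ⊆ offd n := by
      refine prod_subset_S fun s hs t ht => ?_
      rw [Finset.mem_singleton] at hs ht
      rw [hs, ht]
      exact had
    have hle := parts6 f (offd n)
      ((univ \ {a, b}) ×ˢ ({b} : Finset (Fin n)))
      ((univ \ {a, d}) ×ˢ ({d} : Finset (Fin n)))
      (({a} : Finset (Fin n)) ×ˢ ({b} : Finset (Fin n)))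
      (({a} : Finset (Fin n)) ×ˢ ({d} : Finset (Fin n))) ∅ ∅
      hsub1 hsub2 hsub3 hsub4 (Finset.empty_subset _) (Finset.empty_subset _)
      (disj_prod_right (disj_ss hbd))
      (disj_prod_left (disj_single_sdiff (by simp)).symm)
      (disj_prod_right (disj_ss hbd))
      (Finset.disjoint_empty_right _) (Finset.disjoint_empty_right _)
      (disj_prod_right (disj_ss hbd.symm))
      (disj_prod_left (disj_single_sdiff (by simp)).symm)
      (Finset.disjoint_empty_right _) (Finset.disjoint_empty_right _)
      (disj_prod_right (disj_ss hbd))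
      (Finset.disjoint_empty_right _) (Finset.disjoint_empty_right _)
      (Finset.disjoint_empty_right _) (Finset.disjoint_empty_right _)
      (Finset.disjoint_empty_right _)
    rw [Finset.sum_empty, sum_prod_eq f 1 hv1, sum_prod_eq f 1 hv2, sum_prod_eq f 2 hv3,
      sum_prod_eq f 2 hv4, card_sdiff_univ, card_sdiff_univ, Finset.card_pair hab,
      Finset.card_pair had] at hle
    simp only [Finset.card_singleton] at hle
    rw [hdel]
    omega

lemma caseB1 (a b d : Fin n) (hbd : b ≠ d) :
    2 * n - 1 ≤ delS (offd n) (a, b) (a, d) := by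
  by_cases hab : a = b
  · rw [delS_comm]
    exact caseB0 a d b hbd.symm (fun h => hbd (hab.symm.trans h))
  · exact caseB0 a b d hbd hab

end caseB

section caseA
variable {n : ℕ}

lemma caseA0 (hn : 5 ≤ n) (a b c d : Fin n) (hac : a ≠ c) (hbd : b ≠ d)
    (hne : a = b ∨ c ≠ d) :
    2 * n - 1 ≤ delS (offd n) (a, b) (c, d) := by
  set f : Fin n × Fin n → ℕ := fun z => ((dd (a,b) z : ℤ) - (dd (c,d) z : ℤ)).natAbs with hf
  have hdel : delS (offd n) (a,b) (c,d) = ∑ z ∈ offd n, f z := rfl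
  -- P1 : row a
  have hv1 : ∀ p ∈ ({a} : Finset (Fin n)) ×ˢ (univ \ {a, b, d}), f p = 1 := by
    rintro ⟨s, t⟩ hp
    rw [Finset.mem_product, Finset.mem_singleton, Finset.mem_sdiff] at hp
    obtain ⟨hs, -, ht⟩ := hp
    simp only [Finset.mem_insert, Finset.mem_singleton, not_or] at ht
    obtain ⟨hta, htb, htd⟩ := ht
    have hs' : s = a := hs
    rw [hs']
    show ((dd (a,b) (a,t) : ℤ) - (dd (c,d) (a,t) : ℤ)).natAbs = 1
    rw [dd_two (ne_pair2 (Ne.symm htb)) (Or.inl rfl), dd_one (Ne.symm hac) (Ne.symm htd)]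
    decide
  have hsub1 : ({a} : Finset (Fin n)) ×ˢ (univ \ {a, b, d}) ⊆ offd n := by
    refine prod_subset_S fun s hs t ht => ?_
    rw [Finset.mem_singleton] at hs
    simp only [Finset.mem_sdiff, Finset.mem_insert, Finset.mem_singleton, not_or] at ht
    rw [hs]
    exact fun h => ht.2.1 h.symm
  -- P2 : column b
  have hv2 : ∀ p ∈ (univ \ {a, b, c}) ×ˢ ({b} : Finset (Fin n)), f p = 1 := by
    rintro ⟨s, t⟩ hp
    rw [Finset.mem_product, Finset.mem_sdiff, Finset.mem_singleton] at hp
    obtain ⟨⟨-, hs⟩, ht⟩ := hp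
    simp only [Finset.mem_insert, Finset.mem_singleton, not_or] at hs
    obtain ⟨hsa, hsb, hsc⟩ := hs
    have ht' : t = b := ht
    rw [ht']
    show ((dd (a,b) (s,b) : ℤ) - (dd (c,d) (s,b) : ℤ)).natAbs = 1
    rw [dd_two (ne_pair1 (Ne.symm hsa)) (Or.inr rfl), dd_one (Ne.symm hsc) (Ne.symm hbd)]
    decide
  have hsub2 : (univ \ {a, b, c}) ×ˢ ({b} : Finset (Fin n)) ⊆ offd n := by
    refine prod_subset_S fun s hs t ht => ?_
    rw [Finset.mem_singleton] at ht
    simp only [Finset.mem_sdiff, Finset.mem_insert, Finset.mem_singleton, not_or] at hs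
    rw [ht]
    exact hs.2.2.1
  -- P3 : row c
  have hv3 : ∀ p ∈ ({c} : Finset (Fin n)) ×ˢ (univ \ {b, c, d}), f p = 1 := by
    rintro ⟨s, t⟩ hp
    rw [Finset.mem_product, Finset.mem_singleton, Finset.mem_sdiff] at hp
    obtain ⟨hs, -, ht⟩ := hp
    simp only [Finset.mem_insert, Finset.mem_singleton, not_or] at ht
    obtain ⟨htb, htc, htd⟩ := ht
    have hs' : s = c := hs
    rw [hs']
    show ((dd (a,b) (c,t) : ℤ) - (dd (c,d) (c,t) : ℤ)).natAbs = 1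
    rw [dd_one hac (Ne.symm htb), dd_two (ne_pair2 (Ne.symm htd)) (Or.inl rfl)]
    decide
  have hsub3 : ({c} : Finset (Fin n)) ×ˢ (univ \ {b, c, d}) ⊆ offd n := by
    refine prod_subset_S fun s hs t ht => ?_
    rw [Finset.mem_singleton] at hs
    simp only [Finset.mem_sdiff, Finset.mem_insert, Finset.mem_singleton, not_or] at ht
    rw [hs]
    exact fun h => ht.2.2.1 h.symm
  -- P4 : column d
  have hv4 : ∀ p ∈ (univ \ {a, c, d}) ×ˢ ({d} : Finset (Fin n)), f p = 1 := by
    rintro ⟨s, t⟩ hp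
    rw [Finset.mem_product, Finset.mem_sdiff, Finset.mem_singleton] at hp
    obtain ⟨⟨-, hs⟩, ht⟩ := hp
    simp only [Finset.mem_insert, Finset.mem_singleton, not_or] at hs
    obtain ⟨hsa, hsc, hsd⟩ := hs
    have ht' : t = d := ht
    rw [ht']
    show ((dd (a,b) (s,d) : ℤ) - (dd (c,d) (s,d) : ℤ)).natAbs = 1
    rw [dd_one (Ne.symm hsa) hbd, dd_two (ne_pair1 (Ne.symm hsc)) (Or.inr rfl)]
    decide
  have hsub4 : (univ \ {a, c, d}) ×ˢ ({d} : Finset (Fin n)) ⊆ offd n := by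
    refine prod_subset_S fun s hs t ht => ?_
    rw [Finset.mem_singleton] at ht
    simp only [Finset.mem_sdiff, Finset.mem_insert, Finset.mem_singleton, not_or] at hs
    rw [ht]
    exact hs.2.2.2
  -- extras
  have hvE1 : ∀ p ∈ ({a} : Finset (Fin n)) ×ˢ ({b} : Finset (Fin n)), f p = 1 := by
    rintro ⟨s, t⟩ hp
    rw [Finset.mem_product, Finset.mem_singleton, Finset.mem_singleton] at hp
    have h1' : s = a := hp.1
    have h2' : t = b := hp.2
    rw [h1', h2']
    show ((dd (a,b) (a,b) : ℤ) - (dd (c,d) (a,b) : ℤ)).natAbs = 1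
    rw [dd_self, dd_one (Ne.symm hac) (Ne.symm hbd)]
    decide
  have hvE2 : ∀ p ∈ ({c} : Finset (Fin n)) ×ˢ ({d} : Finset (Fin n)), f p = 1 := by
    rintro ⟨s, t⟩ hp
    rw [Finset.mem_product, Finset.mem_singleton, Finset.mem_singleton] at hp
    have h1' : s = c := hp.1
    have h2' : t = d := hp.2
    rw [h1', h2']
    show ((dd (a,b) (c,d) : ℤ) - (dd (c,d) (c,d) : ℤ)).natAbs = 1
    rw [dd_self, dd_one hac hbd]
    decide
  -- generic disjointness facts
  have d12 : Disjoint (({a} : Finset (Fin n)) ×ˢ (univ \ {a, b, d}))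
      ((univ \ {a, b, c}) ×ˢ ({b} : Finset (Fin n))) :=
    disj_prod_left (disj_single_sdiff (by simp))
  have d13 : Disjoint (({a} : Finset (Fin n)) ×ˢ (univ \ {a, b, d}))
      (({c} : Finset (Fin n)) ×ˢ (univ \ {b, c, d})) :=
    disj_prod_left (disj_ss hac)
  have d14 : Disjoint (({a} : Finset (Fin n)) ×ˢ (univ \ {a, b, d}))
      ((univ \ {a, c, d}) ×ˢ ({d} : Finset (Fin n))) :=
    disj_prod_right (disj_single_sdiff (by simp)).symm
  have d15 : Disjoint (({a} : Finset (Fin n)) ×ˢ (univ \ {a, b, d}))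
      (({a} : Finset (Fin n)) ×ˢ ({b} : Finset (Fin n))) :=
    disj_prod_right (disj_single_sdiff (by simp)).symm
  have d16 : Disjoint (({a} : Finset (Fin n)) ×ˢ (univ \ {a, b, d}))
      (({c} : Finset (Fin n)) ×ˢ ({d} : Finset (Fin n))) :=
    disj_prod_left (disj_ss hac)
  have d23 : Disjoint ((univ \ {a, b, c}) ×ˢ ({b} : Finset (Fin n)))
      (({c} : Finset (Fin n)) ×ˢ (univ \ {b, c, d})) :=
    disj_prod_left (disj_single_sdiff (by simp)).symm
  have d24 : Disjoint ((univ \ {a, b, c}) ×ˢ ({b} : Finset (Fin n)))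
      ((univ \ {a, c, d}) ×ˢ ({d} : Finset (Fin n))) :=
    disj_prod_right (disj_ss hbd)
  have d25 : Disjoint ((univ \ {a, b, c}) ×ˢ ({b} : Finset (Fin n)))
      (({a} : Finset (Fin n)) ×ˢ ({b} : Finset (Fin n))) :=
    disj_prod_left (disj_single_sdiff (by simp)).symm
  have d26 : Disjoint ((univ \ {a, b, c}) ×ˢ ({b} : Finset (Fin n)))
      (({c} : Finset (Fin n)) ×ˢ ({d} : Finset (Fin n))) :=
    disj_prod_right (disj_ss hbd)
  have d34 : Disjoint (({c} : Finset (Fin n)) ×ˢ (univ \ {b, c, d}))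
      ((univ \ {a, c, d}) ×ˢ ({d} : Finset (Fin n))) :=
    disj_prod_right (disj_single_sdiff (by simp)).symm
  have d35 : Disjoint (({c} : Finset (Fin n)) ×ˢ (univ \ {b, c, d}))
      (({a} : Finset (Fin n)) ×ˢ ({b} : Finset (Fin n))) :=
    disj_prod_left (disj_ss hac.symm)
  have d36 : Disjoint (({c} : Finset (Fin n)) ×ˢ (univ \ {b, c, d}))
      (({c} : Finset (Fin n)) ×ˢ ({d} : Finset (Fin n))) :=
    disj_prod_right (disj_single_sdiff (by simp)).symm
  have d45 : Disjoint ((univ \ {a, c, d}) ×ˢ ({d} : Finset (Fin n)))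
      (({a} : Finset (Fin n)) ×ˢ ({b} : Finset (Fin n))) :=
    disj_prod_right (disj_ss hbd.symm)
  have d46 : Disjoint ((univ \ {a, c, d}) ×ˢ ({d} : Finset (Fin n)))
      (({c} : Finset (Fin n)) ×ˢ ({d} : Finset (Fin n))) :=
    disj_prod_left (disj_single_sdiff (by simp)).symm
  have d56 : Disjoint (({a} : Finset (Fin n)) ×ˢ ({b} : Finset (Fin n)))
      (({c} : Finset (Fin n)) ×ˢ ({d} : Finset (Fin n))) :=
    disj_prod_left (disj_ss hac)
  by_cases hab : a = b
  · subst hab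
    have hc1 : ({a, a, d} : Finset (Fin n)).card ≤ 2 := by
      rw [Finset.insert_idem]
      simpa using Finset.card_insert_le a ({d} : Finset (Fin n))
    have hc2 : ({a, a, c} : Finset (Fin n)).card ≤ 2 := by
      rw [Finset.insert_idem]
      simpa using Finset.card_insert_le a ({c} : Finset (Fin n))
    by_cases hcd : c = d
    · subst hcd
      have hc3 : ({a, c, c} : Finset (Fin n)).card ≤ 2 := by
        have he : ({a, c, c} : Finset (Fin n)) = {a, c} := by simp
        rw [he]
        simpa using Finset.card_insert_le a ({c} : Finset (Fin n))
      have hc4 : ({a, c, c} : Finset (Fin n)).card ≤ 2 := hc3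
      have hle := parts6 f (offd n)
        (({a} : Finset (Fin n)) ×ˢ (univ \ {a, a, c}))
        ((univ \ {a, a, c}) ×ˢ ({a} : Finset (Fin n)))
        (({c} : Finset (Fin n)) ×ˢ (univ \ {a, c, c}))
        ((univ \ {a, c, c}) ×ˢ ({c} : Finset (Fin n))) ∅ ∅
        hsub1 hsub2 hsub3 hsub4 (Finset.empty_subset _) (Finset.empty_subset _)
        d12 d13 d14 (Finset.disjoint_empty_right _) (Finset.disjoint_empty_right _)
        d23 d24 (Finset.disjoint_empty_right _) (Finset.disjoint_empty_right _)
        d34 (Finset.disjoint_empty_right _) (Finset.disjoint_empty_right _)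
        (Finset.disjoint_empty_right _) (Finset.disjoint_empty_right _)
        (Finset.disjoint_empty_right _)
      rw [Finset.sum_empty, sum_prod_eq f 1 hv1, sum_prod_eq f 1 hv2, sum_prod_eq f 1 hv3,
        sum_prod_eq f 1 hv4] at hle
      simp only [Finset.card_singleton, card_sdiff_univ] at hle
      rw [hdel]
      omega
    · have hc3 := card_triple_le a c d
      have hc4 := card_triple_le a c d
      have hsubE2 : ({c} : Finset (Fin n)) ×ˢ ({d} : Finset (Fin n)) ⊆ offd n := by
        refine prod_subset_S fun s hs t ht => ?_
        rw [Finset.mem_singleton] at hs ht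
        rw [hs, ht]
        exact hcd
      have hle := parts6 f (offd n)
        (({a} : Finset (Fin n)) ×ˢ (univ \ {a, a, d}))
        ((univ \ {a, a, c}) ×ˢ ({a} : Finset (Fin n)))
        (({c} : Finset (Fin n)) ×ˢ (univ \ {a, c, d}))
        ((univ \ {a, c, d}) ×ˢ ({d} : Finset (Fin n)))
        (({c} : Finset (Fin n)) ×ˢ ({d} : Finset (Fin n))) ∅
        hsub1 hsub2 hsub3 hsub4 hsubE2 (Finset.empty_subset _)
        d12 d13 d14 d16 (Finset.disjoint_empty_right _)
        d23 d24 d26 (Finset.disjoint_empty_right _)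
        d34 d36 (Finset.disjoint_empty_right _)
        d46 (Finset.disjoint_empty_right _)
        (Finset.disjoint_empty_right _)
      rw [Finset.sum_empty, sum_prod_eq f 1 hv1, sum_prod_eq f 1 hv2, sum_prod_eq f 1 hv3,
        sum_prod_eq f 1 hv4, sum_prod_eq f 1 hvE2] at hle
      simp only [Finset.card_singleton, card_sdiff_univ] at hle
      rw [hdel]
      omega
  · have hcd : c ≠ d := hne.resolve_left hab
    have hc1 := card_triple_le a b d
    have hc2 := card_triple_le a b c
    have hc3 := card_triple_le b c d
    have hc4 := card_triple_le a c d
    have hsubE1 : ({a} : Finset (Fin n)) ×ˢ ({b} : Finset (Fin n)) ⊆ offd n := by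
      refine prod_subset_S fun s hs t ht => ?_
      rw [Finset.mem_singleton] at hs ht
      rw [hs, ht]
      exact hab
    have hsubE2 : ({c} : Finset (Fin n)) ×ˢ ({d} : Finset (Fin n)) ⊆ offd n := by
      refine prod_subset_S fun s hs t ht => ?_
      rw [Finset.mem_singleton] at hs ht
      rw [hs, ht]
      exact hcd
    have hle := parts6 f (offd n)
      (({a} : Finset (Fin n)) ×ˢ (univ \ {a, b, d}))
      ((univ \ {a, b, c}) ×ˢ ({b} : Finset (Fin n)))
      (({c} : Finset (Fin n)) ×ˢ (univ \ {b, c, d}))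
      ((univ \ {a, c, d}) ×ˢ ({d} : Finset (Fin n)))
      (({a} : Finset (Fin n)) ×ˢ ({b} : Finset (Fin n)))
      (({c} : Finset (Fin n)) ×ˢ ({d} : Finset (Fin n)))
      hsub1 hsub2 hsub3 hsub4 hsubE1 hsubE2
      d12 d13 d14 d15 d16 d23 d24 d25 d26 d34 d35 d36 d45 d46 d56
    rw [sum_prod_eq f 1 hv1, sum_prod_eq f 1 hv2, sum_prod_eq f 1 hv3,
      sum_prod_eq f 1 hv4, sum_prod_eq f 1 hvE1, sum_prod_eq f 1 hvE2] at hle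
    simp only [Finset.card_singleton, card_sdiff_univ] at hle
    rw [hdel]
    omega

lemma caseA (hn : 5 ≤ n) (a b c d : Fin n) (hac : a ≠ c) (hbd : b ≠ d) :
    2 * n - 1 ≤ delS (offd n) (a, b) (c, d) := by
  by_cases h : a = b ∨ c ≠ d
  · exact caseA0 hn a b c d hac hbd h
  · push_neg at h
    rw [delS_comm]
    exact caseA0 hn c d a b hac.symm hbd.symm (Or.inl h.2)

end caseA

section main
variable {n : ℕ}

lemma key (hn : 5 ≤ n) : weakRes (2 * n - 1) (offd n) := by
  rintro ⟨a, b⟩ ⟨c, d⟩ hxy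
  by_cases hac : a = c
  · subst hac
    have hbd : b ≠ d := fun h => hxy (by rw [h])
    exact caseB1 a b d hbd
  · by_cases hbd : b = d
    · subst hbd
      calc 2 * n - 1 ≤ delS (offd n) (b, a) (b, c) := caseB1 b a c hac
        _ = delS (offd n) (a, b) (c, b) := (delS_swap (b, a) (b, c)).symm
    · exact caseA hn a b c d hac hbd

lemma card_offd : (offd n).card = n ^ 2 - n := by
  have h := Finset.card_filter_add_card_filter_not
    (s := (univ : Finset (Fin n × Fin n))) (p := fun p => p.1 = p.2)
  have hdiag : ((univ : Finset (Fin n × Fin n)).filter fun p => p.1 = p.2).card = n := by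
    have he : ((univ : Finset (Fin n × Fin n)).filter fun p => p.1 = p.2)
        = univ.image (fun i : Fin n => (i, i)) := by
      ext ⟨s, t⟩
      simp only [Finset.mem_filter, Finset.mem_univ, true_and, Finset.mem_image,
        Prod.mk.injEq]
      constructor
      · intro hst; exact ⟨s, rfl, hst⟩
      · rintro ⟨i, rfl, rfl⟩; rfl
    rw [he, Finset.card_image_of_injective _ (fun i j h => congrArg Prod.fst h),
      Finset.card_univ, Fintype.card_fin]
  have huniv : (univ : Finset (Fin n × Fin n)).card = n * n := by
    rw [Finset.card_univ, Fintype.card_prod, Fintype.card_fin]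
  have hpow : n ^ 2 = n * n := pow_two n
  have : (offd n).card = ((univ : Finset (Fin n × Fin n)).filter fun p => ¬ p.1 = p.2).card :=
    rfl
  omega

lemma dd_le_two (x z : Fin n × Fin n) : dd x z ≤ 2 := by
  unfold dd
  split_ifs <;> omega

lemma dd_pos {x z : Fin n × Fin n} (h : x ≠ z) : 1 ≤ dd x z := by
  unfold dd
  split_ifs with h1 h2
  · exact absurd h1 h
  · omega
  · omega

lemma lower (hn : 5 ≤ n) (S : Finset (Fin n × Fin n)) (hS : weakRes (2 * n - 1) S) :
    n ^ 2 - n ≤ S.card := by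
  by_contra hlt
  push_neg at hlt
  have hcard : (univ : Finset (Fin n)).card < ((univ : Finset (Fin n × Fin n)) \ S).card := by
    have h1 : S.card ≤ n * n := by
      have := Finset.card_le_univ S
      rwa [Fintype.card_prod, Fintype.card_fin] at this
    have h2 : ((univ : Finset (Fin n × Fin n)) \ S).card = n * n - S.card := by
      rw [Finset.card_sdiff_of_subset (Finset.subset_univ _), Finset.card_univ, Fintype.card_prod,
        Fintype.card_fin]
    have hpow : n ^ 2 = n * n := pow_two n
    rw [h2, Finset.card_univ, Fintype.card_fin]
    omega
  obtain ⟨x, hx, y, hy, hxy, hf⟩ :=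
    Finset.exists_ne_map_eq_of_card_lt_of_maps_to hcard
      (fun (z : Fin n × Fin n) _ => Finset.mem_univ z.2)
  have hxS : x ∉ S := (Finset.mem_sdiff.1 hx).2
  have hyS : y ∉ S := (Finset.mem_sdiff.1 hy).2
  have hx1 : x.1 ≠ y.1 := fun h => hxy (Prod.ext h hf)
  -- upper bound on delS
  have hub : delS S x y ≤ 2 * (n - 1) := by
    have step1 : ∀ z ∈ S, ((dd x z : ℤ) - (dd y z : ℤ)).natAbs ≤
        (if z ∈ ({x.1, y.1} : Finset (Fin n)) ×ˢ (univ \ {x.2}) then 1 else 0) := by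
      intro z hz
      have hzx : x ≠ z := fun h => hxS (h ▸ hz)
      have hzy : y ≠ z := fun h => hyS (h ▸ hz)
      by_cases hmem : z ∈ ({x.1, y.1} : Finset (Fin n)) ×ˢ (univ \ {x.2})
      · rw [if_pos hmem]
        have p1 := dd_pos hzx
        have p2 := dd_pos hzy
        have q1 := dd_le_two x z
        have q2 := dd_le_two y z
        omega
      · rw [if_neg hmem]
        rw [Finset.mem_product, Finset.mem_insert, Finset.mem_singleton, Finset.mem_sdiff,
          Finset.mem_singleton] at hmem
        push_neg at hmem
        have heq : dd x z = dd y z := by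
          by_cases h2 : z.2 = x.2
          · rw [dd_two hzx (Or.inr h2.symm), dd_two hzy (Or.inr (hf ▸ h2.symm))]
          · have h1x : z.1 ≠ x.1 := fun h => h2 (hmem (Or.inl h) (Finset.mem_univ _))
            have h1y : z.1 ≠ y.1 := fun h => h2 (hmem (Or.inr h) (Finset.mem_univ _))
            rw [dd_one (Ne.symm h1x) (fun h => h2 h.symm),
              dd_one (Ne.symm h1y) (fun h => h2 (hf.trans h).symm)]
        rw [heq]
        simp
    calc delS S x y ≤ ∑ z ∈ S,
          (if z ∈ ({x.1, y.1} : Finset (Fin n)) ×ˢ (univ \ {x.2}) then 1 else 0) :=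
            Finset.sum_le_sum step1
      _ ≤ ∑ z ∈ (univ : Finset (Fin n × Fin n)),
          (if z ∈ ({x.1, y.1} : Finset (Fin n)) ×ˢ (univ \ {x.2}) then 1 else 0) :=
            Finset.sum_le_sum_of_subset (Finset.subset_univ S)
      _ = (({x.1, y.1} : Finset (Fin n)) ×ˢ (univ \ {x.2})).card := by
            rw [Finset.sum_ite_mem, Finset.univ_inter, Finset.sum_const, smul_eq_mul, mul_one]
      _ = 2 * (n - 1) := by
            rw [Finset.card_product, Finset.card_pair hx1, card_sdiff_univ,
              Finset.card_singleton]
  have := hS x y hxy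
  omega

end main


theorem stmt_12 (n : ℕ) (hn : 5 ≤ n) :
    wdim n (2 * n - 1) = n ^ 2 - n ∧
      (let S : Finset (Fin n × Fin n) := Finset.univ.filter (fun p => p.1 ≠ p.2)
       weakRes (2 * n - 1) S ∧ S.card = n ^ 2 - n) := by
  have hw : weakRes (2 * n - 1) (offd n) := key hn
  have hc : (offd n).card = n ^ 2 - n := card_offd
  have hmem : n ^ 2 - n ∈
      {m | ∃ S : Finset (Fin n × Fin n), weakRes (2 * n - 1) S ∧ S.card = m} :=
    ⟨offd n, hw, hc⟩
  refine ⟨le_antisymm (Nat.sInf_le hmem) ?_, hw, hc⟩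
  refine le_csInf ⟨_, hmem⟩ ?_
  rintro m ⟨S, hS, rfl⟩
  exact lower hn S hS
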